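/- Let ρ be a risk measure that is monotone, and let 𝐅 = (F₁,…,Fₙ) and 𝐆 = (G₁,…,Gₙ) be n-tuples of Borel probability measures on ℝ with Fᵢ ≺_st Gᵢ for every i (and with ρ defined on Dₙ(𝐅) ∪ Dₙ(𝐆)). Then ρ̄(𝐅) ≤ ρ̄(𝐆), i.e., sup{ρ(H) : H ∈ Dₙ(𝐅)} ≤ sup{ρ(H) : H ∈ Dₙ(𝐆)}. -/

import Mathlib

open MeasureTheory
open scoped ENNReal BigOperators

noncomputable section

/-- The `f`-aggregation set: laws of `f (X₁,…,Xₙ)` over all couplings with marginals `F`. -/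
def aggSetF (n : ℕ) (f : (Fin n → ℝ) → ℝ) (F : Fin n → Measure ℝ) : Set (Measure ℝ) :=
  {H | ∃ μ : Measure (Fin n → ℝ), IsProbabilityMeasure μ ∧
    (∀ i, μ.map (fun x => x i) = F i) ∧ H = μ.map f}

/-- The aggregation set for sums. -/
def aggSet (n : ℕ) (F : Fin n → Measure ℝ) : Set (Measure ℝ) :=
  aggSetF n (fun x => ∑ i, x i) F

/-- A symmetric function on `ℝⁿ`. -/
def IsSymmetricFn (n : ℕ) (f : (Fin n → ℝ) → ℝ) : Prop :=
  ∀ (π : Equiv.Perm (Fin n)) (x : Fin n → ℝ), f (x ∘ π) = f x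

/-- Left-continuous quantile function of a measure on ℝ. -/
def quantile (F : Measure ℝ) (p : ℝ) : ℝ :=
  sInf {x : ℝ | p ≤ (F (Set.Iic x)).toReal}

/-- The uniform probability measure on (0,1). -/
def uniform01 : Measure ℝ := volume.restrict (Set.Ioo (0 : ℝ) 1)

/-- Comonotonic sum F₁ ⊕ ⋯ ⊕ Fₙ : the law of ∑ Fᵢ⁻¹(U), U uniform on (0,1). -/
def comonoSum (n : ℕ) (F : Fin n → Measure ℝ) : Measure ℝ :=
  uniform01.map (fun u => ∑ i, quantile (F i) u)

/-- Convex order F ≺cx G. -/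
def ConvexOrder (F G : Measure ℝ) : Prop :=
  ∀ φ : ℝ → ℝ, ConvexOn ℝ Set.univ φ → Integrable φ F → Integrable φ G →
    ∫ x, φ x ∂F ≤ ∫ x, φ x ∂G

/-- Stochastic order F ≺st G, i.e. F((-∞,x]) ≥ G((-∞,x]) for all x. -/
def StOrder (F G : Measure ℝ) : Prop :=
  ∀ x : ℝ, G (Set.Iic x) ≤ F (Set.Iic x)

/-- Doubly stochastic matrix. -/
def DoublyStochastic {n : ℕ} (Λ : Matrix (Fin n) (Fin n) ℝ) : Prop :=
  (∀ i j, 0 ≤ Λ i j) ∧ (∀ i, ∑ j, Λ i j = 1) ∧ (∀ j, ∑ i, Λ i j = 1)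

/-- Distribution mixture Λ𝐅 : i-th component is ∑ⱼ Λᵢⱼ Fⱼ. -/
def distMix {n : ℕ} (Λ : Matrix (Fin n) (Fin n) ℝ) (F : Fin n → Measure ℝ) :
    Fin n → Measure ℝ :=
  fun i => ∑ j, ENNReal.ofReal (Λ i j) • F j

/-- Quantile mixture Λ⊗𝐅 : i-th component is the law of ∑ⱼ Λᵢⱼ Fⱼ⁻¹(U). -/
def quantileMix {n : ℕ} (Λ : Matrix (Fin n) (Fin n) ℝ) (F : Fin n → Measure ℝ) :
    Fin n → Measure ℝ :=
  fun i => uniform01.map (fun u => ∑ j, Λ i j * quantile (F j) u)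

/-- Worst-case value of a risk measure over the aggregation set, valued in EReal. -/
def worstCase (ρ : Measure ℝ → ℝ) (n : ℕ) (F : Fin n → Measure ℝ) : EReal :=
  sSup ((fun H => ((ρ H : ℝ) : EReal)) '' aggSet n F)

/-- Worst-case Value-at-Risk over the aggregation set, valued in EReal. -/
def worstVaR (p : ℝ) (n : ℕ) (F : Fin n → Measure ℝ) : EReal :=
  sSup ((fun G => ((quantile G p : ℝ) : EReal)) '' aggSet n F)

/-- The class M_D of distributions with a nonincreasing density on an interval support. -/
def MemMD (F : Measure ℝ) : Prop :=
  ∃ f : ℝ → ℝ, Measurable f ∧ (∀ x, 0 ≤ f x) ∧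
    F = volume.withDensity (fun x => ENNReal.ofReal (f x)) ∧
    ∃ s : Set ℝ, s.OrdConnected ∧ (∀ x, x ∉ s → f x = 0) ∧
      (∀ x ∈ s, ∀ y ∈ s, x ≤ y → f y ≤ f x)

/-- The class M_I of distributions with a nondecreasing density on an interval support. -/
def MemMI (F : Measure ℝ) : Prop :=
  ∃ f : ℝ → ℝ, Measurable f ∧ (∀ x, 0 ≤ f x) ∧
    F = volume.withDensity (fun x => ENNReal.ofReal (f x)) ∧
    ∃ s : Set ℝ, s.OrdConnected ∧ (∀ x, x ∉ s → f x = 0) ∧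
      (∀ x ∈ s, ∀ y ∈ s, x ≤ y → f x ≤ f y)

/-- Pareto(α, θ) distribution, via its Lebesgue density α θ^α x^{-(α+1)} on [θ, ∞). -/
def pareto (α θ : ℝ) : Measure ℝ :=
  volume.withDensity
    (fun x => if θ ≤ x then ENNReal.ofReal (α * θ ^ α / x ^ (α + 1)) else 0)

/-- A monotone risk measure (w.r.t. stochastic order, on probability measures). -/
def MonotoneRisk (ρ : Measure ℝ → ℝ) : Prop :=
  ∀ F G : Measure ℝ, IsProbabilityMeasure F → IsProbabilityMeasure G →
    StOrder F G → ρ F ≤ ρ G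

/-- A risk measure consistent with convex order (on finite-mean probability measures). -/
def CxConsistentRisk (ρ : Measure ℝ → ℝ) : Prop :=
  ∀ F G : Measure ℝ, IsProbabilityMeasure F → IsProbabilityMeasure G →
    Integrable id F → Integrable id G → ConvexOrder F G → ρ F ≤ ρ G

/-- Uniform distribution on [a,b]. -/
def unifOn (a b : ℝ) : Measure ℝ :=
  (ENNReal.ofReal (b - a))⁻¹ • volume.restrict (Set.Icc a b)

/-- Bernoulli distribution with parameter p, as a measure on ℝ. -/
def bern (p : ℝ) : Measure ℝ :=
  ENNReal.ofReal (1 - p) • Measure.dirac (0 : ℝ) + ENNReal.ofReal p • Measure.dirac (1 : ℝ)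

/-- The set C(𝐅) of finite-mean distributions dominated by the comonotonic sum in convex order. -/
def CSet (n : ℕ) (F : Fin n → Measure ℝ) : Set (Measure ℝ) :=
  {G | IsProbabilityMeasure G ∧ Integrable id G ∧ ConvexOrder G (comonoSum n F)}


/-!
Each pair `Fᵢ ≺st Gᵢ` admits the quantile coupling `(Fᵢ⁻¹(U), Gᵢ⁻¹(U))`, which lives on
`{x ≤ y}`. Disintegrating it and realising the conditional kernel as a measurable function of an
independent uniform variable, any joint law of `(X₁, …, Xₙ)` with marginals `Fᵢ` extends to a
joint law of `(X, Y)` with `Yᵢ ~ Gᵢ` and `Xᵢ ≤ Yᵢ` almost surely. Hence `∑ Xᵢ ≤ ∑ Yᵢ`, so every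
element of `Dₙ(𝐅)` is stochastically dominated by an element of `Dₙ(𝐆)`, and monotonicity of `ρ`
compares the suprema.
-/

open Set Filter ProbabilityTheory

instance : IsProbabilityMeasure uniform01 :=
  ⟨by simp [uniform01]⟩

section Quantile

variable {F G : Measure ℝ} [IsProbabilityMeasure F] {p : ℝ}

lemma quantile_eq_sInf_cdf : quantile F p = sInf {x | p ≤ cdf F x} := by
  simp only [quantile, cdf_eq_real, measureReal_def]

lemma quantile_le_iff (hp : p ∈ Ioo 0 1) (x : ℝ) : quantile F p ≤ x ↔ p ≤ cdf F x := by
  rw [quantile_eq_sInf_cdf]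
  have hne : {x | p ≤ cdf F x}.Nonempty :=
    ((tendsto_cdf_atTop F).eventually (eventually_ge_nhds hp.2)).exists
  obtain ⟨b, hb⟩ := eventually_atBot.1 ((tendsto_cdf_atBot F).eventually (eventually_lt_nhds hp.1))
  have hbdd : BddBelow {x | p ≤ cdf F x} :=
    ⟨b, fun y hy => le_of_lt (not_le.1 fun hyb => (hb y hyb).not_ge hy)⟩
  refine ⟨fun h => ?_, fun h => csInf_le hbdd h⟩
  refine le_trans ?_ (monotone_cdf F h)
  have hright : ∀ y > sInf {x | p ≤ cdf F x}, p ≤ cdf F y := fun y hy => by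
    obtain ⟨s, hs, hsy⟩ := exists_lt_of_csInf_lt hne hy
    exact hs.trans (monotone_cdf F hsy.le)
  exact ge_of_tendsto ((cdf F).right_continuous _ |>.mono Ioi_subset_Ici_self)
    (eventually_nhdsWithin_of_forall hright)

lemma monotoneOn_quantile : MonotoneOn (quantile F) (Ioo 0 1) := fun _ hp _ hq hpq =>
  (quantile_le_iff hp _).2 (hpq.trans ((quantile_le_iff hq _).1 le_rfl))

lemma aemeasurable_quantile : AEMeasurable (quantile F) uniform01 :=
  aemeasurable_restrict_of_monotoneOn measurableSet_Ioo monotoneOn_quantile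

lemma map_quantile_uniform01 : uniform01.map (quantile F) = F := by
  refine Measure.ext_of_Iic _ _ fun x => ?_
  rw [Measure.map_apply_of_aemeasurable aemeasurable_quantile measurableSet_Iic, uniform01,
    Measure.restrict_apply' measurableSet_Ioo, ← ofReal_cdf]
  have hset : quantile F ⁻¹' Iic x ∩ Ioo 0 1 = Ioo 0 1 ∩ Iic (cdf F x) := by
    ext p
    simp only [mem_inter_iff, mem_preimage, mem_Iic]
    exact ⟨fun h => ⟨h.2, (quantile_le_iff h.2 x).1 h.1⟩,
      fun h => ⟨(quantile_le_iff h.1 x).2 h.2, h.1⟩⟩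
  rw [hset]
  refine le_antisymm ?_ ?_
  · calc volume (Ioo 0 1 ∩ Iic (cdf F x)) ≤ volume (Ioc 0 (cdf F x)) :=
          measure_mono fun p hp => ⟨hp.1.1, hp.2⟩
      _ = ENNReal.ofReal (cdf F x) := by simp
  · calc ENNReal.ofReal (cdf F x) = volume (Ioo 0 (cdf F x)) := by simp
      _ ≤ volume (Ioo 0 1 ∩ Iic (cdf F x)) :=
          measure_mono fun p hp => ⟨⟨hp.1, hp.2.trans_le (cdf_le_one F x)⟩, hp.2.le⟩

lemma quantile_le_quantile_of_stOrder [IsProbabilityMeasure G] (h : StOrder F G)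
    (hp : p ∈ Ioo 0 1) : quantile F p ≤ quantile G p := by
  rw [quantile_le_iff hp]
  refine ((quantile_le_iff (F := G) hp _).1 le_rfl).trans ?_
  rw [cdf_eq_real, cdf_eq_real, measureReal_def, measureReal_def]
  exact ENNReal.toReal_mono (measure_ne_top _ _) (h _)

end Quantile

lemma exists_coupling_le_of_stOrder {F G : Measure ℝ} [IsProbabilityMeasure F]
    [IsProbabilityMeasure G] (h : StOrder F G) :
    ∃ π : Measure (ℝ × ℝ), IsProbabilityMeasure π ∧ π.fst = F ∧ π.snd = G ∧
      ∀ᵐ q ∂π, q.1 ≤ q.2 := by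
  have hF : AEMeasurable (quantile F) uniform01 := aemeasurable_quantile
  have hG : AEMeasurable (quantile G) uniform01 := aemeasurable_quantile
  refine ⟨uniform01.map fun u => (quantile F u, quantile G u),
    Measure.isProbabilityMeasure_map (hF.prodMk hG), ?_, ?_, ?_⟩
  · rw [Measure.fst_map_prodMk₀ hG, map_quantile_uniform01]
  · rw [Measure.snd_map_prodMk₀ hF, map_quantile_uniform01]
  · rw [ae_map_iff (hF.prodMk hG) (measurableSet_le measurable_fst measurable_snd)]
    exact (ae_restrict_mem measurableSet_Ioo).mono fun u hu =>
      quantile_le_quantile_of_stOrder h hu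

lemma MeasureTheory.Measure.exists_map_prodMk_eq {α β : Type*} [MeasurableSpace α]
    [MeasurableSpace β] [StandardBorelSpace β] [Nonempty β]
    (ρ : Measure (α × β)) [IsFiniteMeasure ρ] :
    ∃ f : α → unitInterval → β, Measurable (Function.uncurry f) ∧
      (ρ.fst.prod volume).map (fun p => (p.1, f p.1 p.2)) = ρ := by
  obtain ⟨f, hf, hfκ⟩ := ρ.condKernel.exists_measurable_map_eq_unitInterval
  have hmeas : Measurable fun p : α × unitInterval => (p.1, f p.1 p.2) := measurable_fst.prodMk hf
  refine ⟨f, hf, ?_⟩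
  conv_rhs => rw [← ρ.disintegrate ρ.condKernel]
  ext s hs
  rw [Measure.map_apply hmeas hs, Measure.prod_apply (hmeas hs), Measure.compProd_apply hs]
  refine lintegral_congr fun a => ?_
  rw [← hfκ, Measure.map_apply hf.of_uncurry_left (measurable_prodMk_left hs)]
  rfl

lemma exists_glue_couplings {ι α β : Type*} [Fintype ι] [MeasurableSpace α] [MeasurableSpace β]
    [StandardBorelSpace β] [Nonempty β] (μ : Measure (ι → α)) [SFinite μ]
    (π : ι → Measure (α × β)) [∀ i, IsFiniteMeasure (π i)]
    (hπ : ∀ i, (π i).fst = μ.map (Function.eval i)) :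
    ∃ ν : Measure ((ι → α) × (ι → β)),
      ν.fst = μ ∧ ∀ i, ν.map (fun q => (q.1 i, q.2 i)) = π i := by
  choose f hf hfπ using fun i => (π i).exists_map_prodMk_eq
  have hevals (i : ι) : Measurable fun p : (ι → α) × (ι → unitInterval) => (p.1 i, p.2 i) := by
    fun_prop
  have hY : Measurable fun p : (ι → α) × (ι → unitInterval) => fun i => f i (p.1 i) (p.2 i) :=
    measurable_pi_lambda _ fun i => (hf i).comp (hevals i)
  refine ⟨(μ.prod (volume : Measure (ι → unitInterval))).map
    fun p => (p.1, fun i => f i (p.1 i) (p.2 i)), ?_, fun i => ?_⟩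
  · rw [Measure.fst_map_prodMk hY, Measure.map_fst_prod, measure_univ, one_smul]
  · rw [Measure.map_map (by fun_prop) (measurable_fst.prodMk hY)]
    calc (μ.prod (volume : Measure (ι → unitInterval))).map
          (fun p => (p.1 i, f i (p.1 i) (p.2 i)))
        = ((μ.prod (volume : Measure (ι → unitInterval))).map fun p => (p.1 i, p.2 i)).map
            (fun p => (p.1, f i p.1 p.2)) := by
          rw [Measure.map_map (g := fun p : α × unitInterval => (p.1, f i p.1 p.2))
            (measurable_fst.prodMk (hf i)) (hevals i)]
          rfl
      _ = π i := by
          rw [← hfπ i, hπ i,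
            ← (measurePreserving_eval (fun _ : ι => (volume : Measure unitInterval)) i).map_eq,
            Measure.map_prod_map _ _ (measurable_pi_apply i) (measurable_pi_apply i)]
          rfl

lemma stOrder_map_of_ae_le {Ω : Type*} [MeasurableSpace Ω] {ν : Measure Ω} {X Y : Ω → ℝ}
    (hX : AEMeasurable X ν) (hY : AEMeasurable Y ν) (h : ∀ᵐ ω ∂ν, X ω ≤ Y ω) :
    StOrder (ν.map X) (ν.map Y) := fun c => by
  rw [Measure.map_apply_of_aemeasurable hY measurableSet_Iic,
    Measure.map_apply_of_aemeasurable hX measurableSet_Iic]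
  exact measure_mono_ae (h.mono fun ω hXY hYc => hXY.trans hYc)

lemma isProbabilityMeasure_of_mem_aggSetF {n : ℕ} {f : (Fin n → ℝ) → ℝ} (hf : Measurable f)
    {F : Fin n → Measure ℝ} {H : Measure ℝ} (hH : H ∈ aggSetF n f F) : IsProbabilityMeasure H := by
  obtain ⟨μ, hμ, -, rfl⟩ := hH
  exact Measure.isProbabilityMeasure_map hf.aemeasurable

lemma exists_stOrder_mem_aggSetF {n : ℕ} {f : (Fin n → ℝ) → ℝ} (hf : Measurable f)
    (hmono : Monotone f) {F G : Fin n → Measure ℝ} [∀ i, IsProbabilityMeasure (G i)]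
    (hst : ∀ i, StOrder (F i) (G i)) {H : Measure ℝ} (hH : H ∈ aggSetF n f F) :
    ∃ H' ∈ aggSetF n f G, StOrder H H' := by
  obtain ⟨μ, hμ, hμF, rfl⟩ := hH
  have hF (i : Fin n) : IsProbabilityMeasure (F i) :=
    hμF i ▸ Measure.isProbabilityMeasure_map (measurable_pi_apply i).aemeasurable
  choose π hπ hπF hπG hπle using fun i => exists_coupling_le_of_stOrder (hst i)
  obtain ⟨ν, hνμ, hνπ⟩ := exists_glue_couplings μ π fun i => (hπF i).trans (hμF i).symm
  have hν : IsProbabilityMeasure ν := ⟨by rw [← Measure.fst_univ, hνμ, measure_univ]⟩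
  have hle : ∀ᵐ q ∂ν, ∀ i, q.1 i ≤ q.2 i := ae_all_iff.2 fun i =>
    ae_of_ae_map (by fun_prop) ((hνπ i).symm ▸ hπle i)
  refine ⟨ν.snd.map f, ⟨ν.snd, inferInstance, fun i => ?_, rfl⟩, ?_⟩
  · rw [← hπG i, ← hνπ i, Measure.snd_map_prodMk (by fun_prop), Measure.snd,
      Measure.map_map (measurable_pi_apply i) measurable_snd]
    rfl
  · rw [← hνμ, Measure.fst, Measure.snd, Measure.map_map hf measurable_fst,
      Measure.map_map hf measurable_snd]
    exact stOrder_map_of_ae_le (by fun_prop) (by fun_prop) (hle.mono fun q hq => hmono hq)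

theorem stmt6_general (n : ℕ) (ρ : Measure ℝ → ℝ) (hρ : MonotoneRisk ρ)
    (F G : Fin n → Measure ℝ)
    (hG : ∀ i, IsProbabilityMeasure (G i))
    (hst : ∀ i, StOrder (F i) (G i)) :
    worstCase ρ n F ≤ worstCase ρ n G := by
  have hsum : Measurable fun x : Fin n → ℝ => ∑ i, x i := by fun_prop
  have hmono : Monotone fun x : Fin n → ℝ => ∑ i, x i := fun x y hxy =>
    Finset.sum_le_sum fun i _ => hxy i
  refine sSup_le ?_
  rintro _ ⟨H, hH, rfl⟩
  obtain ⟨H', hH', hHH'⟩ := exists_stOrder_mem_aggSetF hsum hmono hst hH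
  have hρH : ρ H ≤ ρ H' := hρ H H' (isProbabilityMeasure_of_mem_aggSetF hsum hH)
    (isProbabilityMeasure_of_mem_aggSetF hsum hH') hHH'
  exact (EReal.coe_le_coe_iff.2 hρH).trans (le_sSup (mem_image_of_mem _ hH'))

/-- Proposition 4.1(i): monotone risk measures and componentwise stochastic order. -/
theorem stmt6 (n : ℕ) (ρ : Measure ℝ → ℝ) (hρ : MonotoneRisk ρ)
    (F G : Fin n → Measure ℝ)
    (hF : ∀ i, IsProbabilityMeasure (F i)) (hG : ∀ i, IsProbabilityMeasure (G i))
    (hst : ∀ i, StOrder (F i) (G i)) :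
    worstCase ρ n F ≤ worstCase ρ n G :=
  stmt6_general n ρ hρ F G hG hst

end
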